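/- Abstract cone version of the extremality criterion: Let V be a finite-dimensional real vector space, K ⊆ V a closed convex salient cone, D ∈ K, A ∈ interior(K)^∨-positive direction, and ℓ : V → R a linear functional with ℓ(D) < 0, ℓ(A) > 0, and such that for every decomposition D = D_1 + D_2 with D_i ∈ K and D_i not a nonnegative multiple of D, one has ℓ(D_1) ≤ (1/2)ℓ(D) or ℓ(D_2) ≤ (1/2)ℓ(D). If additionally for all s > 0 and i, D_i − sD ∉ K, then assuming nD_1 + A − ((n/2) − 1/d)D ∈ K for all large n with −ℓ(D)/ℓ(A) ≥ d > 0 leads to D_1 − (1/2)D ∈ K, a contradiction; hence D spans an extremal ray of K. -/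

import Mathlib

/-!
If a summand `D₁` of `D` is not on the ray of `D`, then `E_n = n • D₁ + A - (n/2 - 1/d) • D`
equals `n • (D₁ - ½ • D) + (A + d⁻¹ • D)`, so `E_n / n` converges to `D₁ - ½ • D`. Since `K` is a
closed cone this limit lies in `K`, which is excluded by hypothesis. Salience then shows that once
one summand is a nonnegative multiple of `D`, so is the other.
-/

open Filter Topology

section Cone

variable {V : Type*} [AddCommGroup V] [Module ℝ V] {K : Set V}

lemma exists_nonneg_smul_sub_of_exists_nonneg_smul
    (hscale : ∀ x ∈ K, ∀ r : ℝ, 0 ≤ r → r • x ∈ K) (hsalient : ∀ x ∈ K, -x ∈ K → x = 0)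
    {D X : V} (hD : D ∈ K) (hDX : D - X ∈ K) (hX : ∃ t : ℝ, 0 ≤ t ∧ X = t • D) :
    ∃ t : ℝ, 0 ≤ t ∧ D - X = t • D := by
  obtain ⟨t, -, rfl⟩ := hX
  have hsub : D - t • D = (1 - t) • D := by rw [sub_smul, one_smul]
  rcases le_or_gt t 1 with ht | ht
  · exact ⟨1 - t, by linarith, hsub⟩
  · have hneg : -(D - t • D) ∈ K := by
      rw [hsub, ← neg_smul, neg_sub]
      exact hscale D hD _ (by linarith)
    exact ⟨0, le_rfl, by rw [hsalient _ hDX hneg, zero_smul]⟩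

lemma mem_of_eventually_natCast_smul_add_mem [TopologicalSpace V] [IsTopologicalAddGroup V]
    [ContinuousSMul ℝ V] (hclosed : IsClosed K) (hscale : ∀ x ∈ K, ∀ r : ℝ, 0 ≤ r → r • x ∈ K)
    {x y : V} (h : ∀ᶠ n : ℕ in atTop, (n : ℝ) • x + y ∈ K) : x ∈ K := by
  have hinv : Tendsto (fun n : ℕ => (n : ℝ)⁻¹) atTop (𝓝 0) :=
    tendsto_inv_atTop_zero.comp tendsto_natCast_atTop_atTop
  have hlim : Tendsto (fun n : ℕ => x + (n : ℝ)⁻¹ • y) atTop (𝓝 x) := by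
    simpa using (hinv.smul_const y).const_add x
  refine hclosed.mem_of_tendsto hlim ?_
  filter_upwards [h, eventually_ge_atTop 1] with n hn hn1
  have hnpos : (0 : ℝ) < n := by exact_mod_cast hn1
  have hscaled : (n : ℝ)⁻¹ • ((n : ℝ) • x + y) = x + (n : ℝ)⁻¹ • y := by
    rw [smul_add, inv_smul_smul₀ hnpos.ne']
  exact hscaled ▸ hscale _ hn _ (inv_nonneg.mpr hnpos.le)

end Cone

theorem stmt_10_general {V : Type*} [NormedAddCommGroup V] [NormedSpace ℝ V]
    (K : Set V) (hclosed : IsClosed K)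
    (hscale : ∀ x ∈ K, ∀ r : ℝ, 0 ≤ r → r • x ∈ K)
    (hsalient : ∀ x ∈ K, -x ∈ K → x = 0)
    (D A : V) (hD : D ∈ K)
    (d : ℝ)
    (hnosub : ∀ D₁ D₂, D₁ ∈ K → D₂ ∈ K → D = D₁ + D₂ →
      (¬ ∃ t : ℝ, 0 ≤ t ∧ D₁ = t • D) → (¬ ∃ t : ℝ, 0 ≤ t ∧ D₂ = t • D) →
      ∀ s : ℝ, 0 < s → D₁ - s • D ∉ K ∧ D₂ - s • D ∉ K)
    (hEn : ∀ D₁ D₂, D₁ ∈ K → D₂ ∈ K → D = D₁ + D₂ →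
      (¬ ∃ t : ℝ, 0 ≤ t ∧ D₁ = t • D) → (¬ ∃ t : ℝ, 0 ≤ t ∧ D₂ = t • D) →
      ∃ N : ℕ, ∀ n : ℕ, N ≤ n →
        (n : ℝ) • D₁ + A - ((n : ℝ) / 2 - 1 / d) • D ∈ K) :
    ∀ D₁ D₂, D₁ ∈ K → D₂ ∈ K → D = D₁ + D₂ →
      (∃ t : ℝ, 0 ≤ t ∧ D₁ = t • D) ∧ (∃ t : ℝ, 0 ≤ t ∧ D₂ = t • D) := by
  intro D₁ D₂ h₁ h₂ hsum
  have hD₁ : D₁ = D - D₂ := by rw [hsum, add_sub_cancel_right]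
  have hD₂ : D₂ = D - D₁ := by rw [hsum, add_sub_cancel_left]
  by_cases hm₁ : ∃ t : ℝ, 0 ≤ t ∧ D₁ = t • D
  · exact ⟨hm₁, hD₂ ▸ exists_nonneg_smul_sub_of_exists_nonneg_smul hscale hsalient hD
      (hD₂ ▸ h₂) hm₁⟩
  by_cases hm₂ : ∃ t : ℝ, 0 ≤ t ∧ D₂ = t • D
  · exact ⟨hD₁ ▸ exists_nonneg_smul_sub_of_exists_nonneg_smul hscale hsalient hD
      (hD₁ ▸ h₁) hm₂, hm₂⟩
  obtain ⟨N, hN⟩ := hEn D₁ D₂ h₁ h₂ hsum hm₁ hm₂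
  have hlimit : D₁ - (1 / 2 : ℝ) • D ∈ K := by
    refine mem_of_eventually_natCast_smul_add_mem hclosed hscale (y := A + (1 / d) • D) ?_
    filter_upwards [eventually_ge_atTop N] with n hn
    convert hN n hn using 1
    module
  exact ((hnosub D₁ D₂ h₁ h₂ hsum hm₁ hm₂ (1 / 2) (by norm_num)).1 hlimit).elim

/-- Abstract cone version of the extremality criterion (Lemma 4.2):
K a closed convex salient cone in a finite-dimensional real vector space,
D ∈ K, ℓ a linear functional with ℓ(D) < 0, ℓ(A) > 0, -ℓ(D)/ℓ(A) ≥ d > 0,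
such that for every decomposition D = D₁ + D₂ into elements of K neither of
which is a nonnegative multiple of D: one of ℓ(D_i) ≤ (1/2)ℓ(D), D_i - sD ∉ K
for all s > 0, and n•D₁ + A - (n/2 - 1/d)•D ∈ K for all large n. Then D spans
an extremal ray of K. -/
theorem stmt_10 {V : Type*} [NormedAddCommGroup V] [NormedSpace ℝ V]
    [FiniteDimensional ℝ V]
    (K : Set V) (hclosed : IsClosed K)
    (hscale : ∀ x ∈ K, ∀ r : ℝ, 0 ≤ r → r • x ∈ K)
    (hadd : ∀ x ∈ K, ∀ y ∈ K, x + y ∈ K)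
    (hsalient : ∀ x ∈ K, -x ∈ K → x = 0)
    (D A : V) (hD : D ∈ K)
    (ℓ : V →ₗ[ℝ] ℝ) (hlD : ℓ D < 0) (hlA : 0 < ℓ A)
    (d : ℝ) (hd : 0 < d) (hratio : d ≤ -ℓ D / ℓ A)
    (hhalf : ∀ D₁ D₂, D₁ ∈ K → D₂ ∈ K → D = D₁ + D₂ →
      (¬ ∃ t : ℝ, 0 ≤ t ∧ D₁ = t • D) → (¬ ∃ t : ℝ, 0 ≤ t ∧ D₂ = t • D) →
      (ℓ D₁ ≤ (1 / 2) * ℓ D ∨ ℓ D₂ ≤ (1 / 2) * ℓ D))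
    (hnosub : ∀ D₁ D₂, D₁ ∈ K → D₂ ∈ K → D = D₁ + D₂ →
      (¬ ∃ t : ℝ, 0 ≤ t ∧ D₁ = t • D) → (¬ ∃ t : ℝ, 0 ≤ t ∧ D₂ = t • D) →
      ∀ s : ℝ, 0 < s → D₁ - s • D ∉ K ∧ D₂ - s • D ∉ K)
    (hEn : ∀ D₁ D₂, D₁ ∈ K → D₂ ∈ K → D = D₁ + D₂ →
      (¬ ∃ t : ℝ, 0 ≤ t ∧ D₁ = t • D) → (¬ ∃ t : ℝ, 0 ≤ t ∧ D₂ = t • D) →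
      ∃ N : ℕ, ∀ n : ℕ, N ≤ n →
        (n : ℝ) • D₁ + A - ((n : ℝ) / 2 - 1 / d) • D ∈ K) :
    ∀ D₁ D₂, D₁ ∈ K → D₂ ∈ K → D = D₁ + D₂ →
      (∃ t : ℝ, 0 ≤ t ∧ D₁ = t • D) ∧ (∃ t : ℝ, 0 ≤ t ∧ D₂ = t • D) :=
  stmt_10_general K hclosed hscale hsalient D A hD d hnosub hEn
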